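/- arXiv:1110.4493 — 3 statements merged into one kernel-verified Lean document; each statement's English description precedes it below -/
import Mathlib

section
/- Suppose a sequence S of length N over alphabet [1..n] is split into a bitvector Z of length N marking the first occurrence of each symbol, a permutation π of [1..n] with π[i] equal to the rank (among marked positions) of the first occurrence of symbol i, and the subsequence S' of unmarked positions. Then S can be exactly reconstructed: S[p] = S'[rank₀(Z,p)] if Z[p] = 0, and S[p] = π⁻¹[rank₁(Z,p)] if Z[p] = 1. -/
/-! A non-first occurrence `p` is the `rank₀(Z,p)`-th unmarked position, so it is exactly where
`S'` stores `S[p]`. A first occurrence `p` satisfies `idxOf S[p] = p`, and `rank₁` is strictly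
increasing on marked positions; hence `π i = rank₁(Z,p)` forces the first occurrence of `i`
to be `p`. -/

section
variable {n : ℕ}

/-- `q` is the first (leftmost) occurrence in `S` of the symbol `S[q]`
(0-based positions; `d` is a dummy default value). -/
def isFirst (S : List (Fin n)) (d : Fin n) (q : ℕ) : Prop := S.getD q d ∉ S.take q

instance (S : List (Fin n)) (d : Fin n) (q : ℕ) : Decidable (isFirst S d q) := by
  unfold isFirst; infer_instance

/-- `rank₁(Z,p)`: number of marked (first-occurrence) positions `q ≤ p`. -/
def rank1 (S : List (Fin n)) (d : Fin n) (p : ℕ) : ℕ :=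
  ((List.range (p + 1)).filter (fun q => decide (isFirst S d q))).length

/-- `rank₀(Z,p)`: number of unmarked positions `q ≤ p`. -/
def rank0 (S : List (Fin n)) (d : Fin n) (p : ℕ) : ℕ :=
  ((List.range (p + 1)).filter (fun q => decide (¬ isFirst S d q))).length

/-- `S'`: the subsequence of `S` at unmarked (non-first-occurrence) positions. -/
def subseq (S : List (Fin n)) (d : Fin n) : List (Fin n) :=
  ((List.range S.length).filter (fun q => decide (¬ isFirst S d q))).map
    (fun q => S.getD q d)

/-- The permutation `π`: `π i` is the rank, among marked positions, of the first
occurrence of symbol `i` in `S`. -/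
def perm (S : List (Fin n)) (d : Fin n) (i : Fin n) : ℕ :=
  rank1 S d (S.idxOf i)

end

namespace List

theorem getD_idxOf {α : Type*} [DecidableEq α] {l : List α} {a : α} (d : α) (ha : a ∈ l) :
    l.getD (l.idxOf a) d = a := by
  rw [getD_eq_getElem _ _ (idxOf_lt_length_of_mem ha), getElem_idxOf]

variable (P : ℕ → Bool)

theorem length_filter_range_succ (p : ℕ) :
    ((range (p + 1)).filter P).length = ((range p).filter P).length + if P p then 1 else 0 := by
  rw [range_succ, filter_append, length_append]
  split <;> simp [*]

theorem strictMonoOn_length_filter_range :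
    StrictMonoOn (fun p => ((range (p + 1)).filter P).length) {p | P p} := by
  intro q _ q' hq' hlt
  have hsub : (range (q + 1)).filter P <+ (range q').filter P :=
    (range_sublist.2 hlt).filter P
  simp only [length_filter_range_succ P q', show P q' from hq', if_true]
  have := hsub.length_le
  omega

theorem getD_map_filter_range {α : Type*} (f : ℕ → α) (d : α) {p N : ℕ} (hp : p < N)
    (hP : P p) : (((range N).filter P).map f).getD ((range p).filter P).length d = f p := by
  obtain ⟨rest, hrest⟩ : ∃ rest, range N = range p ++ p :: rest :=
    ⟨(range (N - (p + 1))).map (p + 1 + ·), by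
      rw [← singleton_append, ← append_assoc, ← range_succ, ← range_add]; congr 1; omega⟩
  rw [hrest, filter_append, filter_cons_of_pos hP, map_append, map_cons,
    ← length_map (f := f), getD_append_right _ _ _ _ le_rfl]
  simp

end List

section
variable {n : ℕ} {S : List (Fin n)} {d : Fin n}

theorem isFirst_iff_idxOf_eq {p : ℕ} (hp : p < S.length) :
    isFirst S d p ↔ S.idxOf (S.getD p d) = p := by
  rw [isFirst, List.getD_eq_getElem _ _ hp, List.mem_take_iff_idxOf_lt (List.getElem_mem hp)]
  have : S.idxOf S[p] < p + 1 :=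
    (List.mem_take_iff_idxOf_lt (List.getElem_mem hp)).1
      (List.mem_take_iff_getElem.2 ⟨p, by omega, rfl⟩)
  omega

theorem isFirst_idxOf {a : Fin n} (ha : a ∈ S) : isFirst S d (S.idxOf a) := by
  rw [isFirst_iff_idxOf_eq (List.idxOf_lt_length_of_mem ha), List.getD_idxOf d ha]

theorem rank1_injOn : Set.InjOn (rank1 S d) {q | isFirst S d q} := fun _ hq _ hq' =>
  (List.strictMonoOn_length_filter_range _).injOn (decide_eq_true hq) (decide_eq_true hq')

theorem rank0_sub_one_of_not_isFirst {p : ℕ} (h : ¬ isFirst S d p) :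
    rank0 S d p - 1 = ((List.range p).filter (fun q => decide (¬ isFirst S d q))).length := by
  rw [rank0, List.length_filter_range_succ, decide_eq_true h, if_pos rfl, Nat.add_sub_cancel]

end

/-- `π⁻¹[rank₁(Z,p)] = S[p]` is expressed as: `π i = rank₁(Z,p)` holds exactly for `i = S[p]`.
Ranks are 1-based counts of positions `≤ p`, and `S'` is indexed 0-based. -/
theorem stmt_9_general {n : ℕ} (S : List (Fin n)) (hall : ∀ a : Fin n, a ∈ S)
    (d : Fin n) (p : ℕ) (hp : p < S.length) :
    (¬ isFirst S d p → S.getD p d = (subseq S d).getD (rank0 S d p - 1) d) ∧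
    (isFirst S d p → ∀ i : Fin n, perm S d i = rank1 S d p ↔ i = S.getD p d) := by
  refine ⟨fun hp0 => ?_, fun hp1 i => ⟨fun hi => ?_, fun hi => ?_⟩⟩
  · rw [rank0_sub_one_of_not_isFirst hp0, subseq,
      List.getD_map_filter_range _ _ _ hp (decide_eq_true hp0)]
  · have hidx : S.idxOf i = p := rank1_injOn (isFirst_idxOf (hall i)) hp1 hi
    rw [← hidx, List.getD_idxOf d (hall i)]
  · rw [perm, hi, (isFirst_iff_idxOf_eq hp).1 hp1]

/-- A sequence `S` of length `N` over alphabet `[1..n]` (every symbol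
occurring at least once) split into the bitvector `Z` of first occurrences, the
permutation `π` (rank among marked positions of each symbol's first occurrence),
and the subsequence `S'` of unmarked positions, can be exactly reconstructed:
`S[p] = S'[rank₀(Z,p)]` if `Z[p] = 0`, and `S[p] = π⁻¹[rank₁(Z,p)]` if `Z[p] = 1`
(the latter expressed by: `π i = rank₁(Z,p)` holds exactly for `i = S[p]`).
Ranks are 1-based counts of positions `≤ p`, and `S'` is indexed 0-based. -/
theorem stmt_9 {n : ℕ} (hn : 0 < n) (S : List (Fin n)) (hall : ∀ a : Fin n, a ∈ S)
    (d : Fin n) (p : ℕ) (hp : p < S.length) :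
    (¬ isFirst S d p → S.getD p d = (subseq S d).getD (rank0 S d p - 1) d) ∧
    (isFirst S d p → ∀ i : Fin n, perm S d i = rank1 S d p ↔ i = S.getD p d) :=
  stmt_9_general S hall d p hp
end

section
/- With the same setup, for any symbol a ∈ [1..n] and any j ≥ 2, the position of the j-th occurrence of a in S equals select₀(Z, select_a(S', j−1)), i.e., select_a(S, j) = select₀(Z, select_a(S', j−1)). -/
section
variable {n : ℕ}

/-- `select_a(S,j)`: the 1-based position of the `j`-th occurrence of symbol `a`
in `S` (`j` is 1-based; out-of-range defaults to `|S| + 1`). -/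
def selSym (S : List (Fin n)) (d a : Fin n) (j : ℕ) : ℕ :=
  ((List.range S.length).filter (fun q => decide (S.getD q d = a))).getD
    (j - 1) S.length + 1

/-- `select₀(Z,k)`: the 1-based position of the `k`-th zero of the first-occurrence
bitvector `Z` of `S`, i.e. of the `k`-th unmarked position. -/
def sel0 (S : List (Fin n)) (d : Fin n) (k : ℕ) : ℕ :=
  ((List.range S.length).filter (fun q => decide (¬ isFirst S d q))).getD
    (k - 1) S.length + 1

end

/-!
Among the occurrences of `a` in `S` only the first is marked, so the occurrences of `a` in `S'`
are the second, third, … occurrences of `a` in `S`, each read through `select₀`, the map sending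
a position of `S'` to the corresponding unmarked position of `S`.
-/

namespace List
variable {α : Type*}

theorem getD_tail (l : List α) (d : α) (k : ℕ) : l.tail.getD k d = l.getD (k + 1) d := by
  cases l <;> simp

theorem getD_map_of_eq (l : List α) {β : Type*} {f : α → β} {d : α} {e : β} (h : f d = e)
    (k : ℕ) : (l.map f).getD k e = f (l.getD k d) :=
  h ▸ getD_map l d f

theorem map_getD_range (l : List α) (d : α) : (range l.length).map (l.getD · d) = l :=
  ext_getElem (by simp) fun i _ h => by simp [getElem?_eq_getElem h]

theorem map_getD_filter_range (l : List α) (d : α) (p : α → Bool) :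
    ((range l.length).filter (fun i => p (l.getD i d))).map (l.getD · d) = l.filter p := by
  conv_rhs => rw [← map_getD_range l d]
  rw [filter_map]
  rfl

theorem Pairwise.filter_exists_lt_eq_tail [Preorder α] [DecidableLT α] {l : List α}
    (hl : l.Pairwise (· < ·)) : l.filter (fun q => ∃ i ∈ l, i < q) = l.tail := by
  obtain _ | ⟨h, t⟩ := l
  · rfl
  rw [pairwise_cons] at hl
  have h_min : ¬ ∃ i ∈ h :: t, i < h := by
    rintro ⟨i, hi, hih⟩
    obtain rfl | hi := mem_cons.mp hi
    · exact lt_irrefl _ hih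
    · exact lt_asymm (hl.1 i hi) hih
  rw [filter_cons_of_neg (by simpa using h_min), tail_cons, filter_eq_self]
  exact fun q hq => decide_eq_true ⟨h, mem_cons_self, hl.1 q hq⟩

end List

section
variable {n : ℕ} (S : List (Fin n)) (d : Fin n)

/-- Positions here are 0-based, while `selSym` and `sel0` return 1-based ones. -/
def occurrences (a : Fin n) : List ℕ :=
  (List.range S.length).filter (fun q => decide (S.getD q d = a))

def unmarked : List ℕ :=
  (List.range S.length).filter (fun q => decide (¬ isFirst S d q))

theorem selSym_eq_getD_occurrences (a : Fin n) (j : ℕ) :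
    selSym S d a j = (occurrences S d a).getD (j - 1) S.length + 1 := rfl

theorem sel0_eq_getD_unmarked (k : ℕ) :
    sel0 S d k = (unmarked S d).getD (k - 1) S.length + 1 := rfl

theorem subseq_eq_map_unmarked : subseq S d = (unmarked S d).map (S.getD · d) := rfl

variable {S d}

theorem mem_occurrences {a : Fin n} {q : ℕ} :
    q ∈ occurrences S d a ↔ q < S.length ∧ S.getD q d = a := by
  simp [occurrences]

theorem pairwise_lt_occurrences (a : Fin n) : (occurrences S d a).Pairwise (· < ·) :=
  List.pairwise_lt_range.filter _

theorem isFirst_iff_of_mem_occurrences {a : Fin n} {q : ℕ} (hq : q ∈ occurrences S d a) :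
    isFirst S d q ↔ ¬ ∃ i ∈ occurrences S d a, i < q := by
  rw [isFirst, (mem_occurrences.mp hq).2, List.mem_take_iff_getElem, not_iff_not]
  constructor
  · rintro ⟨i, hi, rfl⟩
    exact ⟨i, mem_occurrences.mpr ⟨by omega, List.getD_eq_getElem _ _ _⟩, by omega⟩
  · rintro ⟨i, hi_occ, hiq⟩
    obtain ⟨hi, rfl⟩ := mem_occurrences.mp hi_occ
    exact ⟨i, by omega, (List.getD_eq_getElem _ _ hi).symm⟩

theorem occurrences_filter_not_isFirst (a : Fin n) :
    (occurrences S d a).filter (fun q => decide (¬ isFirst S d q)) = (occurrences S d a).tail := by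
  rw [← (pairwise_lt_occurrences a).filter_exists_lt_eq_tail]
  refine List.filter_congr fun q hq => ?_
  simp [isFirst_iff_of_mem_occurrences hq]

theorem map_getD_unmarked_occurrences_subseq (a : Fin n) :
    (occurrences (subseq S d) d a).map ((unmarked S d).getD · S.length)
      = (occurrences S d a).tail := by
  have h_getD (i : ℕ) (hi : i < (unmarked S d).length) :
      (subseq S d).getD i d = S.getD ((unmarked S d).getD i S.length) d := by
    rw [subseq_eq_map_unmarked, List.getD_eq_getElem _ _ (by simpa using hi), List.getElem_map,
      List.getD_eq_getElem _ _ hi]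
  have h_occ : occurrences (subseq S d) d a = (List.range (unmarked S d).length).filter
      (fun i => decide (S.getD ((unmarked S d).getD i S.length) d = a)) := by
    rw [occurrences, subseq_eq_map_unmarked, List.length_map, ← subseq_eq_map_unmarked]
    exact List.filter_congr fun i hi => by rw [h_getD i (List.mem_range.mp hi)]
  rw [h_occ, List.map_getD_filter_range _ _ (fun q => decide (S.getD q d = a)),
    ← occurrences_filter_not_isFirst, unmarked, occurrences, List.filter_filter,
    List.filter_filter]
  exact List.filter_congr fun q _ => Bool.and_comm _ _

end

theorem stmt_10_general {n : ℕ} (S : List (Fin n)) (d : Fin n) (a : Fin n) (j : ℕ)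
    (hj2 : 2 ≤ j) :
    selSym S d a j = sel0 S d (selSym (subseq S d) d a (j - 1)) := by
  obtain ⟨k, rfl⟩ : ∃ k, j = k + 2 := ⟨j - 2, by omega⟩
  have h_len : (subseq S d).length = (unmarked S d).length := by
    rw [subseq_eq_map_unmarked, List.length_map]
  -- an out-of-range occurrence index falls back to `|S'|` on the right, which `sel0` sends to
  -- the same default `|S| + 1` as on the left
  have h_default : (unmarked S d).getD (unmarked S d).length S.length = S.length :=
    List.getD_eq_default _ _ le_rfl
  simp only [selSym_eq_getD_occurrences, sel0_eq_getD_unmarked, h_len, Nat.add_sub_cancel,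
    show k + 2 - 1 = k + 1 from rfl]
  rw [← List.getD_tail, ← map_getD_unmarked_occurrences_subseq,
    List.getD_map_of_eq _ (f := ((unmarked S d).getD · S.length)) h_default]

/-- With `S` a sequence over `[1..n]` in which every symbol occurs,
`Z` marking first occurrences and `S'` the subsequence of unmarked positions, for
any symbol `a` and any `j ≥ 2` (with `j` at most the number of occurrences of `a`),
the position of the `j`-th occurrence of `a` in `S` equals
`select₀(Z, select_a(S', j − 1))`:
`select_a(S, j) = select₀(Z, select_a(S', j − 1))`. -/
theorem stmt_10 {n : ℕ} (hn : 0 < n) (S : List (Fin n))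
    (hall : ∀ a : Fin n, a ∈ S) (d : Fin n) (a : Fin n) (j : ℕ)
    (hj2 : 2 ≤ j) (hj : j ≤ S.count a) :
    selSym S d a j = sel0 S d (selSym (subseq S d) d a (j - 1)) :=
  stmt_10_general S d a j hj2
end

section
/- Consider the following tracking process for secondary occurrences: starting from a node u in the grammar tree, repeatedly move to the parent; at each internal node v other than the root, the nonterminal X[v] labels at least one other node (a leaf) of the grammar tree, where the process branches. Charging each upward step from u to v to one of the other occurrences of X[v], the total number of steps over the whole process is at most twice the total number of occurrences reported; formally, if every non-root internal node label occurs at least twice in the tree, then in the recursion tree of this process the number of edges traversed is O(number of leaves of the recursion, i.e., reported occurrences). -/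
/-- Rose trees: the shape of the recursion tree of the occurrence-tracking
process. -/
inductive RT (L : Type) : Type where
  | node : L → List (RT L) → RT L

/-- Number of nodes. -/
def RT.size {L : Type} : RT L → ℕ
  | .node _ cs => 1 + (cs.attach.map (fun c => RT.size c.1)).sum
decreasing_by
  have := List.sizeOf_lt_of_mem c.2; simp_wf; omega

/-- Number of leaves. -/
def RT.leafCount {L : Type} : RT L → ℕ
  | .node _ cs => if cs.isEmpty then 1 else
      (cs.attach.map (fun c => RT.leafCount c.1)).sum
decreasing_by
  have := List.sizeOf_lt_of_mem c.2; simp_wf; omega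

/-- Every internal node has at least two children. -/
def RT.binBranch {L : Type} : RT L → Prop
  | .node _ cs => (cs = [] ∨ 2 ≤ cs.length) ∧ ∀ c ∈ cs, RT.binBranch c
decreasing_by
  rename_i cs' hmem; have := List.sizeOf_lt_of_mem hmem; simp_wf; omega

theorem RT.key {L : Type} : ∀ t : RT L, RT.binBranch t →
    RT.size t + 1 ≤ 2 * RT.leafCount t
  | .node x cs, hb => by
    rw [RT.size, RT.leafCount]
    rw [RT.binBranch] at hb
    obtain ⟨hlen, hall⟩ := hb
    rcases hlen with h | h
    · subst h; simp
    · have hne : ¬ cs.isEmpty := by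
        cases cs with
        | nil => simp at h
        | cons a l => simp
      simp only [hne, Bool.false_eq_true, if_false]
      have ih : ∀ c ∈ cs.attach, RT.size c.1 + 1 ≤ 2 * RT.leafCount c.1 := by
        intro c _
        exact RT.key c.1 (hall c.1 c.2)
      have hsum : (cs.attach.map (fun c => RT.size c.1)).sum + cs.length ≤
          2 * (cs.attach.map (fun c => RT.leafCount c.1)).sum := by
        calc (cs.attach.map (fun c => RT.size c.1)).sum + cs.length
            = (cs.attach.map (fun c => RT.size c.1 + 1)).sum := by
              rw [List.sum_map_add]; simp
          _ ≤ (cs.attach.map (fun c => 2 * RT.leafCount c.1)).sum := by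
              apply List.sum_le_sum; intro c hc; exact ih c hc
          _ = 2 * (cs.attach.map (fun c => RT.leafCount c.1)).sum := by
              rw [List.sum_map_mul_left]
      omega
decreasing_by
  have := List.sizeOf_lt_of_mem c.2; simp_wf; omega

/-- In the tracking process for secondary occurrences, every
non-root internal node label occurs at least twice in the grammar tree, so each
internal node of the recursion tree (a node labeled by a nonterminal with `k ≥ 2`
occurrences, which continues climbing and spawns `k − 1` new processes) has at
least 2 children.  Hence the number of edges traversed (= nodes minus one) is
`O(number of leaves of the recursion)`, i.e. at most `c` times the number of
reported occurrences, with the universal constant `c = 2`. -/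
theorem stmt_14 {L : Type} (t : RT L) (hb : RT.binBranch t) :
    RT.size t - 1 ≤ 2 * RT.leafCount t := by
  have := RT.key t hb
  omega
end
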